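/- arXiv:2009.01681 — 2 statements merged into one kernel-verified Lean document; each statement's English description precedes it below -/
import Mathlib

section
/- Let k be a field, m,n positive integers, N an invertible n×n matrix over k, and M = 0_m ⊕ N. Then the semisimple quotient o(M)/rad(o(M)) is isomorphic as a Lie algebra to the direct product (gl_m(k)/rad(gl_m(k))) × (o(N)/rad(o(N))). -/
/-!
An element of `o(0ₘ ⊕ N)` has lower-left block `C` with `N * C = 0`, so `C = 0` since `N` is
invertible: the algebra is block upper triangular, with arbitrary upper-left block and lower-right
block in `o(N)`. Taking the diagonal blocks is therefore a surjective Lie morphism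
`o(0ₘ ⊕ N) → gl_m × o(N)` whose kernel, the upper-right block part, is abelian. Composed with the
quotient maps it gives a surjection onto `gl_m/rad × o(N)/rad` with solvable kernel, and since
this product has trivial radical, that kernel is exactly the radical of `o(0ₘ ⊕ N)`.
-/

open Matrix LieAlgebra

attribute [local instance 100] LieRing.ofAssociativeRing

/-- The Lie algebra `o(M) = {X ∈ gl | Xᵀ * M + M * X = 0}` of matrices preserving the
bilinear form with Gram matrix `M`. -/
def lieO (k : Type) [Field k] {ι : Type} [Fintype ι] [DecidableEq ι]
    (M : Matrix ι ι k) : LieSubalgebra k (Matrix ι ι k) where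
  carrier := {X | Xᵀ * M + M * X = 0}
  zero_mem' := by simp
  add_mem' := by
    intro X Y hX hY
    simp only [Set.mem_setOf_eq] at *
    rw [Matrix.transpose_add, Matrix.add_mul, Matrix.mul_add, add_add_add_comm, hX, hY, add_zero]
  smul_mem' := by
    intro c X hX
    simp only [Set.mem_setOf_eq] at *
    rw [Matrix.transpose_smul, Matrix.smul_mul, Matrix.mul_smul, ← smul_add, hX, smul_zero]
  lie_mem' := by
    intro X Y hX hY
    simp only [Set.mem_setOf_eq] at *
    have hX' : Xᵀ * M = -(M * X) := eq_neg_of_add_eq_zero_left hX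
    have hY' : Yᵀ * M = -(M * Y) := eq_neg_of_add_eq_zero_left hY
    have h1 : Yᵀ * Xᵀ * M = M * Y * X := by
      rw [mul_assoc, hX', mul_neg, ← mul_assoc, hY', neg_mul, neg_neg]
    have h2 : Xᵀ * Yᵀ * M = M * X * Y := by
      rw [mul_assoc, hY', mul_neg, ← mul_assoc, hX', neg_mul, neg_neg]
    simp only [Ring.lie_def, Matrix.transpose_sub, Matrix.transpose_mul, Matrix.sub_mul,
      Matrix.mul_sub]
    rw [h1, h2, ← mul_assoc M X Y, ← mul_assoc M Y X]
    abel

instance prodBracket {L M : Type} [LieRing L] [LieRing M] : Bracket (L × M) (L × M) :=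
  ⟨fun x y => (⁅x.1, y.1⁆, ⁅x.2, y.2⁆)⟩

@[simp] lemma prod_bracket_fst {L M : Type} [LieRing L] [LieRing M] (x y : L × M) :
    ⁅x, y⁆.1 = ⁅x.1, y.1⁆ := rfl

@[simp] lemma prod_bracket_snd {L M : Type} [LieRing L] [LieRing M] (x y : L × M) :
    ⁅x, y⁆.2 = ⁅x.2, y.2⁆ := rfl

/-- The product of two Lie rings, with componentwise bracket. -/
instance prodLieRing {L M : Type} [LieRing L] [LieRing M] : LieRing (L × M) where
  add_lie x y z := by ext <;> simp
  lie_add x y z := by ext <;> simp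
  lie_self x := by ext <;> simp
  leibniz_lie x y z := by ext <;> simp

/-- The product of two Lie algebras. -/
instance prodLieAlgebra (k : Type) {L M : Type} [CommRing k] [LieRing L] [LieRing M]
    [LieAlgebra k L] [LieAlgebra k M] : LieAlgebra k (L × M) where
  lie_smul c x y := by ext <;> simp

open LieIdeal

namespace LieAlgebra

variable {R L L' M M' : Type*} [CommRing R] [LieRing L] [LieAlgebra R L] [LieRing L']
  [LieAlgebra R L'] [LieRing M] [LieAlgebra R M] [LieRing M'] [LieAlgebra R M']

theorem isSolvable_iff_exists_derivedSeriesOfIdeal_eq_bot (I : LieIdeal R L) :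
    IsSolvable I ↔ ∃ k, derivedSeriesOfIdeal R L k I = ⊥ := by
  simp only [isSolvable_iff R I, derivedSeries_eq_bot_iff]

theorem _root_.LieIdeal.map_derivedSeriesOfIdeal_le (f : L →ₗ⁅R⁆ L') (I : LieIdeal R L)
    (k : ℕ) : (derivedSeriesOfIdeal R L k I).map f ≤ derivedSeriesOfIdeal R L' k (I.map f) := by
  induction k with
  | zero => rfl
  | succ k ih =>
    simp only [derivedSeriesOfIdeal_succ]
    exact (map_bracket_le f).trans (LieSubmodule.mono_lie ih ih)

theorem _root_.LieIdeal.map_derivedSeriesOfIdeal {f : L →ₗ⁅R⁆ L'} (hf : Function.Surjective f)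
    (I : LieIdeal R L) (k : ℕ) :
    (derivedSeriesOfIdeal R L k I).map f = derivedSeriesOfIdeal R L' k (I.map f) := by
  induction k with
  | zero => rfl
  | succ k ih => simp only [derivedSeriesOfIdeal_succ, map_bracket_eq f hf, ih]

theorem _root_.LieIdeal.isSolvable_map {f : L →ₗ⁅R⁆ L'} (hf : Function.Surjective f)
    (I : LieIdeal R L) [IsSolvable I] : IsSolvable (I.map f) := by
  obtain ⟨k, hk⟩ := (isSolvable_iff_exists_derivedSeriesOfIdeal_eq_bot I).mp ‹_›
  refine (isSolvable_iff_exists_derivedSeriesOfIdeal_eq_bot _).mpr ⟨k, ?_⟩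
  rw [← map_derivedSeriesOfIdeal hf, hk, LieIdeal.map_eq_bot_iff]
  exact bot_le

theorem _root_.LieIdeal.isSolvable_of_isSolvable_map (f : L →ₗ⁅R⁆ L') (I : LieIdeal R L)
    [IsSolvable (I.map f)] [IsSolvable (I ⊓ f.ker : LieIdeal R L)] : IsSolvable I := by
  obtain ⟨k, hk⟩ := (isSolvable_iff_exists_derivedSeriesOfIdeal_eq_bot (I.map f)).mp ‹_›
  obtain ⟨l, hl⟩ := (isSolvable_iff_exists_derivedSeriesOfIdeal_eq_bot (I ⊓ f.ker)).mp ‹_›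
  have hk_ker : derivedSeriesOfIdeal R L k I ≤ I ⊓ f.ker :=
    le_inf (derivedSeriesOfIdeal_le_self I k)
      (LieIdeal.map_eq_bot_iff.mp (le_bot_iff.mp (hk ▸ map_derivedSeriesOfIdeal_le f I k)))
  refine (isSolvable_iff_exists_derivedSeriesOfIdeal_eq_bot I).mpr ⟨l + k, le_bot_iff.mp ?_⟩
  rw [derivedSeriesOfIdeal_add, ← hl]
  exact derivedSeriesOfIdeal_mono hk_ker l

theorem _root_.LieIdeal.isSolvable_comap (f : L →ₗ⁅R⁆ L') [IsSolvable f.ker] (J : LieIdeal R L')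
    [IsSolvable J] : IsSolvable (J.comap f) := by
  have : IsSolvable ((J.comap f).map f) := le_solvable_ideal_solvable LieIdeal.map_comap_le ‹_›
  have : IsSolvable (J.comap f ⊓ f.ker : LieIdeal R L) :=
    le_solvable_ideal_solvable inf_le_right ‹_›
  exact isSolvable_of_isSolvable_map f _

theorem _root_.LieHom.ker_comp (f : L →ₗ⁅R⁆ L') (g : L' →ₗ⁅R⁆ M) :
    (g.comp f).ker = g.ker.comap f := by
  ext x
  simp only [LieHom.mem_ker, LieIdeal.mem_comap, LieHom.comp_apply]

theorem _root_.LieHom.isSolvable_ker_comp (f : L →ₗ⁅R⁆ L') (g : L' →ₗ⁅R⁆ M) [IsSolvable f.ker]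
    [IsSolvable g.ker] : IsSolvable (g.comp f).ker := by
  rw [LieHom.ker_comp]
  exact LieIdeal.isSolvable_comap f g.ker

theorem _root_.LieHom.isSolvable_ker_prodMap (f : L →ₗ⁅R⁆ L') (g : M →ₗ⁅R⁆ M')
    [IsSolvable f.ker] [IsSolvable g.ker] : IsSolvable (f.prodMap g).ker := by
  set K := (f.prodMap g).ker
  let K₁ : LieIdeal R (L × M) := K ⊓ (LieHom.fst R L M).ker
  have hK : K.map (LieHom.fst R L M) ≤ f.ker := LieIdeal.map_le_iff_le_comap.mpr
    fun x hx ↦ LieHom.mem_ker.mpr (congrArg Prod.fst (LieHom.mem_ker.mp hx))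
  have hK₁ : K₁.map (LieHom.snd R L M) ≤ g.ker := LieIdeal.map_le_iff_le_comap.mpr
    fun x hx ↦ LieHom.mem_ker.mpr (congrArg Prod.snd (LieHom.mem_ker.mp hx.1))
  have hK₁_inf : K₁ ⊓ (LieHom.snd R L M).ker = ⊥ :=
    (LieSubmodule.eq_bot_iff _).mpr fun x hx ↦
      Prod.ext (LieHom.mem_ker.mp hx.1.2) (LieHom.mem_ker.mp hx.2)
  have := le_solvable_ideal_solvable hK ‹_›
  have := le_solvable_ideal_solvable hK₁ ‹_›
  have : IsSolvable (K₁ ⊓ (LieHom.snd R L M).ker : LieIdeal R (L × M)) :=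
    hK₁_inf ▸ isSolvableBot R (L × M)
  have := LieIdeal.isSolvable_of_isSolvable_map (LieHom.snd R L M) K₁
  exact LieIdeal.isSolvable_of_isSolvable_map (LieHom.fst R L M) K

def _root_.LieIdeal.mkQ (I : LieIdeal R L) : L →ₗ⁅R⁆ L ⧸ I :=
  { (I : Submodule R L).mkQ with map_lie' := rfl }

theorem _root_.LieIdeal.mkQ_surjective (I : LieIdeal R L) : Function.Surjective I.mkQ :=
  Submodule.mkQ_surjective _

@[simp]
theorem _root_.LieIdeal.ker_mkQ (I : LieIdeal R L) : I.mkQ.ker = I := by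
  ext x
  exact LieHom.mem_ker.trans (Submodule.Quotient.mk_eq_zero _)

instance _root_.LieIdeal.isSolvable_ker_mkQ (I : LieIdeal R L) [IsSolvable I] :
    IsSolvable I.mkQ.ker := by
  rw [LieIdeal.ker_mkQ]
  infer_instance

instance hasTrivialRadical_quotient_radical [IsNoetherian R L] :
    HasTrivialRadical R (L ⧸ radical R L) := by
  refine hasTrivialRadical_of_no_solvable_ideals fun I hI ↦ (LieSubmodule.eq_bot_iff I).mpr ?_
  let π := (radical R L).mkQ
  have hle : I.comap π ≤ π.ker := by
    rw [LieIdeal.ker_mkQ, ← LieIdeal.solvable_iff_le_radical]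
    exact LieIdeal.isSolvable_comap π I
  intro x hx
  obtain ⟨y, rfl⟩ := (radical R L).mkQ_surjective x
  exact LieHom.mem_ker.mp (hle hx)

instance hasTrivialRadical_prod [HasTrivialRadical R L] [HasTrivialRadical R M] :
    HasTrivialRadical R (L × M) := by
  refine hasTrivialRadical_of_no_solvable_ideals fun I hI ↦ (LieSubmodule.eq_bot_iff I).mpr ?_
  have h₁ : I.map (LieHom.fst R L M) = ⊥ :=
    have := LieIdeal.isSolvable_map (LieHom.fst_surjective (R := R) (L₂ := M)) I
    HasTrivialRadical.eq_bot_of_isSolvable _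
  have h₂ : I.map (LieHom.snd R L M) = ⊥ :=
    have := LieIdeal.isSolvable_map (LieHom.snd_surjective (R := R) (L₁ := L)) I
    HasTrivialRadical.eq_bot_of_isSolvable _
  rw [LieIdeal.map_eq_bot_iff] at h₁ h₂
  exact fun x hx ↦ Prod.ext (LieHom.mem_ker.mp (h₁ hx)) (LieHom.mem_ker.mp (h₂ hx))

theorem _root_.LieHom.ker_eq_radical [IsNoetherian R L] [HasTrivialRadical R L']
    (f : L →ₗ⁅R⁆ L') (hf : Function.Surjective f) [IsSolvable f.ker] :
    f.ker = radical R L := by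
  refine le_antisymm ((LieIdeal.solvable_iff_le_radical _ _ _).mp ‹_›) ?_
  rw [← LieIdeal.map_eq_bot_iff]
  have := LieIdeal.isSolvable_map hf (radical R L)
  exact HasTrivialRadical.eq_bot_of_isSolvable _

theorem _root_.LieHom.nonempty_quotient_radical_equiv [IsNoetherian R L]
    [HasTrivialRadical R L'] (f : L →ₗ⁅R⁆ L') (hf : Function.Surjective f) [IsSolvable f.ker] :
    Nonempty ((L ⧸ radical R L) ≃ₗ⁅R⁆ L') := by
  rw [← f.ker_eq_radical hf]
  exact ⟨f.quotKerEquivRange.trans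
    ((LieEquiv.ofEq _ _ (by rw [f.range_eq_top.mpr hf])).trans LieSubalgebra.topEquiv)⟩

end LieAlgebra

namespace Matrix

variable {α : Type*} [NonUnitalNonAssocSemiring α] {l₁ l₂ m₁ m₂ n₁ n₂ : Type*} [Fintype m₁]
  [Fintype m₂]

theorem toBlocks₁₁_mul_of_toBlocks₂₁_eq_zero (P : Matrix (l₁ ⊕ l₂) (m₁ ⊕ m₂) α)
    {Q : Matrix (m₁ ⊕ m₂) (n₁ ⊕ n₂) α} (hQ : Q.toBlocks₂₁ = 0) :
    (P * Q).toBlocks₁₁ = P.toBlocks₁₁ * Q.toBlocks₁₁ := by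
  rw [← P.fromBlocks_toBlocks, ← Q.fromBlocks_toBlocks, fromBlocks_multiply,
    toBlocks_fromBlocks₁₁, hQ, Matrix.mul_zero, add_zero]
  simp only [toBlocks_fromBlocks₁₁]

theorem toBlocks₂₂_mul_of_toBlocks₂₁_eq_zero {P : Matrix (l₁ ⊕ l₂) (m₁ ⊕ m₂) α}
    (Q : Matrix (m₁ ⊕ m₂) (n₁ ⊕ n₂) α) (hP : P.toBlocks₂₁ = 0) :
    (P * Q).toBlocks₂₂ = P.toBlocks₂₂ * Q.toBlocks₂₂ := by
  rw [← P.fromBlocks_toBlocks, ← Q.fromBlocks_toBlocks, fromBlocks_multiply,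
    toBlocks_fromBlocks₂₂, hP, Matrix.zero_mul, zero_add]
  simp only [toBlocks_fromBlocks₂₂]

theorem fromBlocks_zero_mul_fromBlocks_zero (B B' : Matrix m₁ m₂ α) :
    (fromBlocks 0 B 0 0 : Matrix (m₁ ⊕ m₂) (m₁ ⊕ m₂) α) * fromBlocks 0 B' 0 0 = 0 := by
  simp [fromBlocks_multiply]

end Matrix

section LieO

variable {k : Type} [Field k] {ι₁ ι₂ : Type} [Fintype ι₁] [Fintype ι₂] [DecidableEq ι₁]
  [DecidableEq ι₂] {N : Matrix ι₂ ι₂ k}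

theorem mem_lieO_iff {ι : Type} [Fintype ι] [DecidableEq ι] {M X : Matrix ι ι k} :
    X ∈ lieO k M ↔ Xᵀ * M + M * X = 0 :=
  Iff.rfl

theorem mem_lieO_fromBlocks_zero_iff (hN : IsUnit N)
    {X : Matrix (ι₁ ⊕ ι₂) (ι₁ ⊕ ι₂) k} :
    X ∈ lieO k (fromBlocks 0 0 0 N) ↔ X.toBlocks₂₁ = 0 ∧ X.toBlocks₂₂ ∈ lieO k N := by
  rw [← X.fromBlocks_toBlocks, mem_lieO_iff, fromBlocks_transpose, fromBlocks_multiply,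
    fromBlocks_multiply, fromBlocks_add, ← fromBlocks_zero, fromBlocks_inj]
  simp only [toBlocks_fromBlocks₂₁, toBlocks_fromBlocks₂₂, mem_lieO_iff, Matrix.mul_zero,
    Matrix.zero_mul, add_zero, zero_add, true_and]
  constructor
  · rintro ⟨-, hC, hD⟩
    refine ⟨?_, hD⟩
    rw [← nonsing_inv_mul_cancel_left N X.toBlocks₂₁ ((isUnit_iff_isUnit_det N).mp hN), hC,
      Matrix.mul_zero]
  · rintro ⟨hC, hD⟩
    simp only [hC, transpose_zero, Matrix.zero_mul, Matrix.mul_zero, hD, and_self]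

def lieODiagBlocks (hN : IsUnit N) :
    lieO k (fromBlocks 0 0 0 N : Matrix (ι₁ ⊕ ι₂) (ι₁ ⊕ ι₂) k) →ₗ⁅k⁆
      Matrix ι₁ ι₁ k × lieO k N where
  toFun X := (X.1.toBlocks₁₁, ⟨X.1.toBlocks₂₂, ((mem_lieO_fromBlocks_zero_iff hN).mp X.2).2⟩)
  map_add' _ _ := rfl
  map_smul' _ _ := rfl
  map_lie' {X Y} := by
    have hX := ((mem_lieO_fromBlocks_zero_iff hN).mp X.2).1
    have hY := ((mem_lieO_fromBlocks_zero_iff hN).mp Y.2).1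
    refine Prod.ext ?_ (Subtype.ext ?_)
    · change (X.1 * Y.1).toBlocks₁₁ - (Y.1 * X.1).toBlocks₁₁ = _
      rw [toBlocks₁₁_mul_of_toBlocks₂₁_eq_zero _ hY,
        toBlocks₁₁_mul_of_toBlocks₂₁_eq_zero _ hX]
      rfl
    · change (X.1 * Y.1).toBlocks₂₂ - (Y.1 * X.1).toBlocks₂₂ = _
      rw [toBlocks₂₂_mul_of_toBlocks₂₁_eq_zero _ hX,
        toBlocks₂₂_mul_of_toBlocks₂₁_eq_zero _ hY]
      rfl

theorem lieODiagBlocks_surjective (hN : IsUnit N) :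
    Function.Surjective (lieODiagBlocks (ι₁ := ι₁) hN) := by
  rintro ⟨A, D, hD⟩
  have hmem : fromBlocks A 0 0 D ∈ lieO k (fromBlocks 0 0 0 N) :=
    (mem_lieO_fromBlocks_zero_iff hN).mpr ⟨toBlocks_fromBlocks₂₁ .., hD⟩
  exact ⟨⟨_, hmem⟩, Prod.ext (toBlocks_fromBlocks₁₁ ..) (Subtype.ext (toBlocks_fromBlocks₂₂ ..))⟩

theorem eq_fromBlocks_of_mem_ker_lieODiagBlocks (hN : IsUnit N) {X}
    (hX : X ∈ (lieODiagBlocks (ι₁ := ι₁) hN).ker) :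
    X.1 = fromBlocks 0 X.1.toBlocks₁₂ 0 0 := by
  have h := LieHom.mem_ker.mp hX
  have h₁₁ : X.1.toBlocks₁₁ = 0 := congrArg Prod.fst h
  have h₂₂ : X.1.toBlocks₂₂ = 0 := congrArg (Subtype.val ∘ Prod.snd) h
  conv_lhs => rw [← X.1.fromBlocks_toBlocks, h₁₁, h₂₂,
    ((mem_lieO_fromBlocks_zero_iff hN).mp X.2).1]

instance isLieAbelian_ker_lieODiagBlocks (hN : IsUnit N) :
    IsLieAbelian (lieODiagBlocks (ι₁ := ι₁) hN).ker where
  trivial X Y := by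
    apply Subtype.ext; apply Subtype.ext
    change X.1.1 * Y.1.1 - Y.1.1 * X.1.1 = 0
    rw [eq_fromBlocks_of_mem_ker_lieODiagBlocks hN X.2,
      eq_fromBlocks_of_mem_ker_lieODiagBlocks hN Y.2, fromBlocks_zero_mul_fromBlocks_zero,
      fromBlocks_zero_mul_fromBlocks_zero, sub_zero]

end LieO

theorem lieO_blockDiag_semisimple_quotient_general (k : Type) [Field k] (m n : ℕ)
    (N : Matrix (Fin n) (Fin n) k) (hN : IsUnit N) :
    Nonempty
      ((↥(lieO k (Matrix.fromBlocks 0 0 0 N : Matrix (Fin m ⊕ Fin n) (Fin m ⊕ Fin n) k)) ⧸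
          LieAlgebra.radical k
            ↥(lieO k (Matrix.fromBlocks 0 0 0 N : Matrix (Fin m ⊕ Fin n) (Fin m ⊕ Fin n) k)))
        ≃ₗ⁅k⁆
        ((Matrix (Fin m) (Fin m) k ⧸ LieAlgebra.radical k (Matrix (Fin m) (Fin m) k)) ×
          (↥(lieO k N) ⧸ LieAlgebra.radical k ↥(lieO k N)))) := by
  let π := (radical k (Matrix (Fin m) (Fin m) k)).mkQ.prodMap (radical k (lieO k N)).mkQ
  have hπ : Function.Surjective π :=
    (LieIdeal.mkQ_surjective _).prodMap (LieIdeal.mkQ_surjective _)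
  have : IsSolvable π.ker := LieHom.isSolvable_ker_prodMap _ _
  have : IsSolvable (π.comp (lieODiagBlocks hN)).ker := LieHom.isSolvable_ker_comp _ _
  exact (π.comp (lieODiagBlocks hN)).nonempty_quotient_radical_equiv
    (hπ.comp (lieODiagBlocks_surjective hN))

/-- For `M = 0ₘ ⊕ N` with `N` invertible, the semisimple quotient
`o(M)/rad(o(M))` is isomorphic as a Lie algebra to
`(gl_m(k)/rad(gl_m(k))) × (o(N)/rad(o(N)))`. -/
theorem lieO_blockDiag_semisimple_quotient (k : Type) [Field k] (m n : ℕ)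
    (hm : 0 < m) (hn : 0 < n) (N : Matrix (Fin n) (Fin n) k) (hN : IsUnit N) :
    Nonempty
      ((↥(lieO k (Matrix.fromBlocks 0 0 0 N : Matrix (Fin m ⊕ Fin n) (Fin m ⊕ Fin n) k)) ⧸
          LieAlgebra.radical k
            ↥(lieO k (Matrix.fromBlocks 0 0 0 N : Matrix (Fin m ⊕ Fin n) (Fin m ⊕ Fin n) k)))
        ≃ₗ⁅k⁆
        ((Matrix (Fin m) (Fin m) k ⧸ LieAlgebra.radical k (Matrix (Fin m) (Fin m) k)) ×
          (↥(lieO k N) ⧸ LieAlgebra.radical k ↥(lieO k N)))) :=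
  lieO_blockDiag_semisimple_quotient_general k m n N hN
end

section
/- Let k be a field with char k = 2, m,n ≥ 1 integers, D an invertible diagonal n×n matrix over k, and M = 0_m ⊕ D. Then the Lie algebra o(M) is solvable if and only if m ≤ 2 and n ≤ 2. -/
/-!
Write `X ∈ o(0 ⊕ D)` in blocks `[[A, B], [C, E]]`. The defining equation forces `C = 0` and
`E ∈ o(D)` and leaves `A`, `B` free, so `X ↦ (A, E)` maps `o(M)` onto `gl_m × o(D)` with kernel the
abelian algebra of `B`-blocks: `o(M)` is solvable iff `gl_m` and `o(D)` are.

For three distinct indices `i, j, l` the elements `F i j = single i j (D j) - single j i (D i)` of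
`o(D)` satisfy `⁅F i j, F j l⁆ = -D j • F l i`, a cycle of brackets that never leaves the derived
series; hence `o(D)`, and `gl ⊇ o(1)`, are not solvable in size at least 3, in any characteristic.
In size at most 2, commutators in `o(D)` have zero diagonal and commutators of zero-diagonal
matrices are diagonal, so `o(D)` is metabelian. In characteristic 2 a trace-zero `2 × 2` matrix has
equal diagonal entries, so the commutator of two of them is scalar and `gl_2` is solvable.
-/

open Matrix LieAlgebra

attribute [local instance 100] LieRing.ofAssociativeRing

namespace LieAlgebra

variable {R L : Type*} [CommRing R] [LieRing L] [LieAlgebra R L]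

theorem derivedSeries_succ_le_of_lie_mem {j : ℕ} {T : Submodule R L}
    (h : ∀ x ∈ derivedSeries R L j, ∀ y ∈ derivedSeries R L j, ⁅x, y⁆ ∈ T) :
    (derivedSeries R L (j + 1)).toSubmodule ≤ T := by
  rw [derivedSeries_def, derivedSeriesOfIdeal_succ, LieSubmodule.lieIdeal_oper_eq_linear_span',
    Submodule.span_le]
  rintro _ ⟨x, hx, y, hy, rfl⟩
  exact h x hx y hy

theorem derivedSeries_succ_eq_bot_of_lie_eq_zero {j : ℕ}
    (h : ∀ x ∈ derivedSeries R L j, ∀ y ∈ derivedSeries R L j, ⁅x, y⁆ = 0) :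
    derivedSeries R L (j + 1) = ⊥ := by
  rw [derivedSeries_def, derivedSeriesOfIdeal_succ, LieSubmodule.lie_eq_bot_iff]
  exact h

theorem lie_mem_derivedSeries_succ {j : ℕ} {x y : L} (hx : x ∈ derivedSeries R L j)
    (hy : y ∈ derivedSeries R L j) : ⁅x, y⁆ ∈ derivedSeries R L (j + 1) := by
  rw [derivedSeries_def, derivedSeriesOfIdeal_succ]
  exact LieSubmodule.lie_mem_lie hx hy

theorem _root_.LieHom.map_eq_zero_of_mem_derivedSeries {L' : Type*} [LieRing L']
    [LieAlgebra R L'] (f : L →ₗ⁅R⁆ L') {i j : ℕ} (hj : derivedSeries R L' j = ⊥) (hij : j ≤ i)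
    {x : L} (hx : x ∈ derivedSeries R L i) : f x = 0 := by
  have : f x ∈ derivedSeries R L' j :=
    derivedSeriesOfIdeal_antitone _ hij <|
      LieIdeal.derivedSeries_map_le (f := f) i (LieIdeal.mem_map hx)
  simpa [hj] using this

theorem isSolvable_of_lie_eq_zero_of_map_eq_zero {L₁ L₂ : Type*} [LieRing L₁] [LieAlgebra R L₁]
    [LieRing L₂] [LieAlgebra R L₂] [IsSolvable L₁] [IsSolvable L₂]
    (f : L →ₗ⁅R⁆ L₁) (g : L →ₗ⁅R⁆ L₂)
    (h : ∀ x y, f x = 0 → g x = 0 → f y = 0 → g y = 0 → ⁅x, y⁆ = 0) : IsSolvable L := by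
  obtain ⟨j₁, hj₁⟩ := IsSolvable.solvable R L₁
  obtain ⟨j₂, hj₂⟩ := IsSolvable.solvable R L₂
  have hf {x} (hx : x ∈ derivedSeries R L (max j₁ j₂)) : f x = 0 :=
    f.map_eq_zero_of_mem_derivedSeries hj₁ (le_max_left j₁ j₂) hx
  have hg {x} (hx : x ∈ derivedSeries R L (max j₁ j₂)) : g x = 0 :=
    g.map_eq_zero_of_mem_derivedSeries hj₂ (le_max_right j₁ j₂) hx
  exact IsSolvable.mk (derivedSeries_succ_eq_bot_of_lie_eq_zero fun x hx y hy =>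
    h x y (hf hx) (hg hx) (hf hy) (hg hy))

theorem not_isSolvable_of_lie_cycle {K : Type*} [Field K] [LieAlgebra K L] {x y z : L} {a b c : K}
    (ha : a ≠ 0) (hb : b ≠ 0) (hc : c ≠ 0)
    (hxy : ⁅x, y⁆ = a • z) (hyz : ⁅y, z⁆ = b • x) (hzx : ⁅z, x⁆ = c • y) (hx : x ≠ 0) :
    ¬ IsSolvable L := by
  intro hL
  obtain ⟨j, hj⟩ := IsSolvable.solvable K L
  have mem_of_lie {u v w : L} {d : K} (hd : d ≠ 0) (huv : ⁅u, v⁆ = d • w) {i : ℕ}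
      (hu : u ∈ derivedSeries K L i) (hv : v ∈ derivedSeries K L i) :
      w ∈ derivedSeries K L (i + 1) := by
    have := lie_mem_derivedSeries_succ hu hv
    rwa [huv, ← LieSubmodule.mem_toSubmodule, Submodule.smul_mem_iff _ hd] at this
  have mem_derivedSeries (i : ℕ) :
      x ∈ derivedSeries K L i ∧ y ∈ derivedSeries K L i ∧ z ∈ derivedSeries K L i := by
    induction i with
    | zero => simp
    | succ i ih =>
      obtain ⟨hx, hy, hz⟩ := ih
      exact ⟨mem_of_lie hb hyz hy hz, mem_of_lie hc hzx hz hx, mem_of_lie ha hxy hx hy⟩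
  exact hx (by simpa [hj] using (mem_derivedSeries j).1)

end LieAlgebra

theorem Fintype.sum_eq_add_of_card_le_two {ι M : Type*} [Fintype ι] [DecidableEq ι]
    [AddCommMonoid M] (hι : Fintype.card ι ≤ 2) {i j : ι} (hij : i ≠ j) (f : ι → M) :
    ∑ l, f l = f i + f j := by
  have hpair : ({i, j} : Finset ι) = Finset.univ :=
    Finset.eq_univ_of_card _ <| le_antisymm (Finset.card_le_univ _)
      (hι.trans (Finset.card_pair hij).ge)
  rw [← hpair, Finset.sum_pair hij]

namespace Matrix

theorem diagonal_mul_eq_zero_iff {R m n : Type*} [Fintype n] [DecidableEq n] [Semiring R]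
    [NoZeroDivisors R] {D : n → R} (hD : ∀ i, D i ≠ 0) {C : Matrix n m R} :
    diagonal D * C = 0 ↔ C = 0 := by
  simp [← Matrix.ext_iff, diagonal_mul, hD]

variable {ι R : Type*} [Fintype ι] [DecidableEq ι] [CommRing R]

theorem trace_lie (X Y : Matrix ι ι R) : trace ⁅X, Y⁆ = 0 := by
  rw [Ring.lie_def, trace_sub, trace_mul_comm, sub_self]

theorem lie_apply_of_ne (hι : Fintype.card ι ≤ 2) {i j : ι} (hij : i ≠ j) (X Y : Matrix ι ι R) :
    ⁅X, Y⁆ i j = X i i * Y i j + X i j * Y j j - (Y i i * X i j + Y i j * X j j) := by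
  rw [Ring.lie_def, sub_apply, mul_apply, mul_apply, Fintype.sum_eq_add_of_card_le_two hι hij,
    Fintype.sum_eq_add_of_card_le_two hι hij]

theorem lie_eq_zero_of_diag_eq_zero (hι : Fintype.card ι ≤ 2) {X Y : Matrix ι ι R}
    (hX : ∀ i, X i i = 0) (hY : ∀ i, Y i i = 0) {i j : ι} (hij : i ≠ j) : ⁅X, Y⁆ i j = 0 := by
  rw [lie_apply_of_ne hι hij, hX, hX, hY, hY]
  ring

theorem diag_eq_of_trace_eq_zero [CharP R 2] (hι : Fintype.card ι ≤ 2) {X : Matrix ι ι R}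
    (hX : trace X = 0) {i j : ι} (hij : i ≠ j) : X i i = X j j := by
  rwa [trace, Fintype.sum_eq_add_of_card_le_two hι hij, diag_apply, diag_apply,
    CharTwo.add_eq_zero] at hX

theorem lie_lie_eq_zero_of_trace_eq_zero [CharP R 2] (hι : Fintype.card ι ≤ 2)
    {X Y : Matrix ι ι R} (hX : trace X = 0) (hY : trace Y = 0) (Z : Matrix ι ι R) :
    ⁅⁅X, Y⁆, Z⁆ = 0 := by
  have hW : ⁅X, Y⁆ = diagonal (diag ⁅X, Y⁆) := by
    ext i j
    rcases eq_or_ne i j with rfl | hij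
    · simp
    · rw [diagonal_apply_ne _ hij, lie_apply_of_ne hι hij, diag_eq_of_trace_eq_zero hι hX hij,
        diag_eq_of_trace_eq_zero hι hY hij]
      ring
  ext i j
  rw [hW, Ring.lie_def, sub_apply, diagonal_mul, mul_diagonal, zero_apply]
  rcases eq_or_ne i j with rfl | hij
  · ring
  · rw [diag_apply, diag_apply, diag_eq_of_trace_eq_zero hι (trace_lie X Y) hij]
    ring

theorem lie_single_sub_single {a b c : ι} (hab : a ≠ b) (hbc : b ≠ c) (hac : a ≠ c)
    (u v u' v' : R) :
    ⁅single a b u - single b a v, single b c u' - single c b v'⁆ =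
      single a c (u * u') - single c a (v' * v) := by
  simp only [Ring.lie_def, Matrix.sub_mul, Matrix.mul_sub, single_mul_single_same,
    single_mul_single_of_ne _ _ _ _ hab, single_mul_single_of_ne _ _ _ _ hab.symm,
    single_mul_single_of_ne _ _ _ _ hbc, single_mul_single_of_ne _ _ _ _ hbc.symm,
    single_mul_single_of_ne _ _ _ _ hac, single_mul_single_of_ne _ _ _ _ hac.symm]
  abel

section blocks

variable {m n : Type*} [Fintype m] [Fintype n]

theorem toBlocks₁₁_lie {X Y : Matrix (m ⊕ n) (m ⊕ n) R} (hX : X.toBlocks₂₁ = 0)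
    (hY : Y.toBlocks₂₁ = 0) : ⁅X, Y⁆.toBlocks₁₁ = ⁅X.toBlocks₁₁, Y.toBlocks₁₁⁆ := by
  rw [← fromBlocks_toBlocks X, ← fromBlocks_toBlocks Y, hX, hY]
  simp [Ring.lie_def, fromBlocks_multiply, sub_eq_add_neg, fromBlocks_neg, fromBlocks_add]

theorem toBlocks₂₂_lie {X Y : Matrix (m ⊕ n) (m ⊕ n) R} (hX : X.toBlocks₂₁ = 0)
    (hY : Y.toBlocks₂₁ = 0) : ⁅X, Y⁆.toBlocks₂₂ = ⁅X.toBlocks₂₂, Y.toBlocks₂₂⁆ := by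
  rw [← fromBlocks_toBlocks X, ← fromBlocks_toBlocks Y, hX, hY]
  simp [Ring.lie_def, fromBlocks_multiply, sub_eq_add_neg, fromBlocks_neg, fromBlocks_add]

theorem lie_fromBlocks_zero_zero_zero (B B' : Matrix m n R) :
    ⁅(fromBlocks 0 B 0 0 : Matrix (m ⊕ n) (m ⊕ n) R),
      (fromBlocks 0 B' 0 0 : Matrix (m ⊕ n) (m ⊕ n) R)⁆ = 0 := by
  simp [Ring.lie_def, fromBlocks_multiply]

end blocks

end Matrix

theorem isSolvable_matrix_of_card_le_two {ι R : Type*} [Fintype ι] [DecidableEq ι] [CommRing R]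
    [CharP R 2] (hι : Fintype.card ι ≤ 2) : IsSolvable (Matrix ι ι R) := by
  have trace_eq_zero : ∀ x ∈ derivedSeries R (Matrix ι ι R) 1, trace x = 0 := fun x hx =>
    derivedSeries_succ_le_of_lie_mem (j := 0) (T := LinearMap.ker (traceLinearMap ι R R))
      (fun y _ z _ => trace_lie y z) hx
  have lie_mem_center : ∀ x ∈ derivedSeries R (Matrix ι ι R) 1,
      ∀ y ∈ derivedSeries R (Matrix ι ι R) 1, ⁅x, y⁆ ∈ center R (Matrix ι ι R) :=
    fun x hx y hy => (LieModule.mem_maxTrivSubmodule _ _ _ _).mpr fun z => by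
      rw [← lie_skew, lie_lie_eq_zero_of_trace_eq_zero hι (trace_eq_zero x hx)
        (trace_eq_zero y hy), neg_zero]
  have le_center : ∀ x ∈ derivedSeries R (Matrix ι ι R) 2, x ∈ center R (Matrix ι ι R) :=
    fun x hx => derivedSeries_succ_le_of_lie_mem (T := (center R _).toSubmodule)
      lie_mem_center hx
  refine IsSolvable.mk (R := R) (k := 3)
    (derivedSeries_succ_eq_bot_of_lie_eq_zero fun x hx y _ => ?_)
  rw [← lie_skew, (LieModule.mem_maxTrivSubmodule _ _ _ _).mp (le_center x hx), neg_zero]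

section lieO

variable {k : Type} [Field k] {ι : Type} [Fintype ι] [DecidableEq ι]

theorem mem_lieO {M X : Matrix ι ι k} : X ∈ lieO k M ↔ Xᵀ * M + M * X = 0 := Iff.rfl

variable {D : ι → k}

theorem mem_lieO_diagonal_iff {X : Matrix ι ι k} :
    X ∈ lieO k (diagonal D) ↔ ∀ i j, D i * X i j + D j * X j i = 0 := by
  rw [mem_lieO, ← Matrix.ext_iff]
  simp only [Matrix.add_apply, mul_diagonal, diagonal_mul, transpose_apply, Matrix.zero_apply]
  exact forall_congr' fun i => forall_congr' fun j => by rw [add_comm, mul_comm (X j i)]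

theorem single_sub_single_mem_lieO_diagonal (a b : ι) :
    single a b (D b) - single b a (D a) ∈ lieO k (diagonal D) := by
  rw [mem_lieO_diagonal_iff]
  intro i j
  simp only [Matrix.sub_apply, single_apply]
  split_ifs <;> grind

theorem lie_apply_self_eq_zero_of_mem_lieO_diagonal (hD : ∀ i, D i ≠ 0) {X Y : Matrix ι ι k}
    (hX : X ∈ lieO k (diagonal D)) (hY : Y ∈ lieO k (diagonal D)) (i : ι) : ⁅X, Y⁆ i i = 0 := by
  rw [mem_lieO_diagonal_iff] at hX hY
  have : D i * ⁅X, Y⁆ i i = 0 := by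
    rw [Ring.lie_def, Matrix.sub_apply, mul_apply, mul_apply, ← Finset.sum_sub_distrib,
      Finset.mul_sum]
    refine Finset.sum_eq_zero fun l _ => ?_
    linear_combination Y l i * hX i l - X l i * hY i l
  exact (mul_eq_zero.mp this).resolve_left (hD i)

theorem isSolvable_lieO_diagonal_of_card_le_two (hD : ∀ i, D i ≠ 0)
    (hι : Fintype.card ι ≤ 2) : IsSolvable (lieO k (diagonal D)) := by
  have diag_eq_zero :
      ∀ x ∈ derivedSeries k (lieO k (diagonal D)) 1, ∀ i, (x : Matrix ι ι k) i i = 0 := by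
    intro x hx
    have := derivedSeries_succ_le_of_lie_mem (j := 0)
      (T := LinearMap.ker ((diagLinearMap ι k k).comp (lieO k (diagonal D)).incl.toLinearMap))
      (fun y _ z _ => by
        ext i
        simpa using lie_apply_self_eq_zero_of_mem_lieO_diagonal hD y.2 z.2 i) hx
    simpa [funext_iff] using this
  refine IsSolvable.mk (R := k) (k := 2) <|
    derivedSeries_succ_eq_bot_of_lie_eq_zero fun x hx y hy => ?_
  ext i j
  rw [LieSubalgebra.coe_bracket, ZeroMemClass.coe_zero, Matrix.zero_apply]
  rcases eq_or_ne i j with rfl | hij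
  · exact lie_apply_self_eq_zero_of_mem_lieO_diagonal hD x.2 y.2 i
  · exact lie_eq_zero_of_diag_eq_zero hι (diag_eq_zero x hx) (diag_eq_zero y hy) hij

theorem not_isSolvable_lieO_diagonal (hD : ∀ i, D i ≠ 0) (hι : 2 < Fintype.card ι) :
    ¬ IsSolvable (lieO k (diagonal D)) := by
  obtain ⟨a, b, c, hab, hac, hbc⟩ := Fintype.two_lt_card_iff.mp hι
  let F (i j : ι) : lieO k (diagonal D) :=
    ⟨single i j (D j) - single j i (D i), single_sub_single_mem_lieO_diagonal i j⟩
  have lie_F {i j l : ι} (hij : i ≠ j) (hjl : j ≠ l) (hil : i ≠ l) :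
      ⁅F i j, F j l⁆ = (-D j) • F l i := by
    ext1
    simp only [F, LieSubalgebra.coe_bracket, SetLike.val_smul, lie_single_sub_single hij hjl hil]
    ext p q
    simp only [Matrix.sub_apply, Matrix.smul_apply, single_apply, smul_eq_mul]
    split_ifs <;> ring
  refine not_isSolvable_of_lie_cycle (neg_ne_zero.mpr (hD b)) (neg_ne_zero.mpr (hD c))
    (neg_ne_zero.mpr (hD a)) (lie_F hab hbc hac) (lie_F hbc hac.symm hab.symm)
    (lie_F hac.symm hab hbc.symm) ?_
  intro h
  have := congr_fun₂ (congrArg Subtype.val h) a b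
  simp [F, single_apply_of_row_ne hab.symm, hD b] at this

theorem not_isSolvable_matrix (hι : 2 < Fintype.card ι) : ¬ IsSolvable (Matrix ι ι k) :=
  fun _ => not_isSolvable_lieO_diagonal (D := fun _ => 1) (fun _ => one_ne_zero) hι
    (Function.Injective.lieAlgebra_isSolvable (f := (lieO k _).incl) Subtype.val_injective)

theorem isSolvable_matrix_iff_card_le_two [CharP k 2] :
    IsSolvable (Matrix ι ι k) ↔ Fintype.card ι ≤ 2 :=
  ⟨fun h => not_lt.mp fun hι => not_isSolvable_matrix hι h, isSolvable_matrix_of_card_le_two⟩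

theorem isSolvable_lieO_diagonal_iff_card_le_two {D : ι → k} (hD : ∀ i, D i ≠ 0) :
    IsSolvable (lieO k (diagonal D)) ↔ Fintype.card ι ≤ 2 :=
  ⟨fun h => not_lt.mp fun hι => not_isSolvable_lieO_diagonal hD hι h,
    isSolvable_lieO_diagonal_of_card_le_two hD⟩

end lieO

section blocks

variable {k : Type} [Field k] {m n : Type} [Fintype m] [Fintype n] [DecidableEq m] [DecidableEq n]
  {D : n → k}

theorem mem_lieO_fromBlocks_iff (hD : ∀ i, D i ≠ 0) {X : Matrix (m ⊕ n) (m ⊕ n) k} :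
    X ∈ lieO k (fromBlocks 0 0 0 (diagonal D)) ↔
      X.toBlocks₂₁ = 0 ∧ X.toBlocks₂₂ ∈ lieO k (diagonal D) := by
  have transpose_mul_diagonal (C : Matrix n m k) : Cᵀ * diagonal D = (diagonal D * C)ᵀ := by
    rw [transpose_mul, diagonal_transpose]
  rw [mem_lieO, mem_lieO, ← fromBlocks_toBlocks X]
  simp only [fromBlocks_transpose, fromBlocks_multiply, Matrix.mul_zero, Matrix.zero_mul, add_zero,
    zero_add, fromBlocks_add, ← fromBlocks_zero, fromBlocks_inj, true_and, toBlocks_fromBlocks₂₁,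
    toBlocks_fromBlocks₂₂]
  rw [transpose_mul_diagonal, transpose_eq_zero, diagonal_mul_eq_zero_iff hD, and_self_left]

def lieOToBlocks₁₁ (hD : ∀ i, D i ≠ 0) :
    lieO k (fromBlocks 0 0 0 (diagonal D) : Matrix (m ⊕ n) (m ⊕ n) k) →ₗ⁅k⁆ Matrix m m k where
  toFun X := X.1.toBlocks₁₁
  map_add' _ _ := rfl
  map_smul' _ _ := rfl
  map_lie' {X Y} :=
    toBlocks₁₁_lie ((mem_lieO_fromBlocks_iff hD).1 X.2).1 ((mem_lieO_fromBlocks_iff hD).1 Y.2).1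

def lieOToBlocks₂₂ (hD : ∀ i, D i ≠ 0) :
    lieO k (fromBlocks 0 0 0 (diagonal D) : Matrix (m ⊕ n) (m ⊕ n) k) →ₗ⁅k⁆
      lieO k (diagonal D) where
  toFun X := ⟨X.1.toBlocks₂₂, ((mem_lieO_fromBlocks_iff hD).1 X.2).2⟩
  map_add' _ _ := rfl
  map_smul' _ _ := rfl
  map_lie' {X Y} := Subtype.ext <|
    toBlocks₂₂_lie ((mem_lieO_fromBlocks_iff hD).1 X.2).1 ((mem_lieO_fromBlocks_iff hD).1 Y.2).1

theorem lieOToBlocks₁₁_surjective (hD : ∀ i, D i ≠ 0) :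
    Function.Surjective (lieOToBlocks₁₁ (m := m) hD) :=
  fun A => ⟨⟨fromBlocks A 0 0 0, (mem_lieO_fromBlocks_iff hD).2 ⟨rfl, by simp [zero_mem]⟩⟩, rfl⟩

theorem lieOToBlocks₂₂_surjective (hD : ∀ i, D i ≠ 0) :
    Function.Surjective (lieOToBlocks₂₂ (m := m) hD) :=
  fun E => ⟨⟨fromBlocks 0 0 0 E, (mem_lieO_fromBlocks_iff hD).2 ⟨rfl, by simp⟩⟩, rfl⟩

theorem eq_fromBlocks_of_lieOToBlocks_eq_zero (hD : ∀ i, D i ≠ 0)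
    {X : lieO k (fromBlocks 0 0 0 (diagonal D) : Matrix (m ⊕ n) (m ⊕ n) k)}
    (h₁₁ : lieOToBlocks₁₁ hD X = 0) (h₂₂ : lieOToBlocks₂₂ hD X = 0) :
    X.1 = fromBlocks 0 X.1.toBlocks₁₂ 0 0 := by
  have h₁₁' : X.1.toBlocks₁₁ = 0 := h₁₁
  have h₂₂' : X.1.toBlocks₂₂ = 0 := congrArg Subtype.val h₂₂
  conv_lhs => rw [← fromBlocks_toBlocks X.1, h₁₁', ((mem_lieO_fromBlocks_iff hD).1 X.2).1, h₂₂']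

theorem isSolvable_lieO_fromBlocks_iff (hD : ∀ i, D i ≠ 0) :
    IsSolvable (lieO k (fromBlocks 0 0 0 (diagonal D) : Matrix (m ⊕ n) (m ⊕ n) k)) ↔
      IsSolvable (Matrix m m k) ∧ IsSolvable (lieO k (diagonal D)) := by
  refine ⟨fun _ => ⟨(lieOToBlocks₁₁_surjective (m := m) hD).lieAlgebra_isSolvable,
    (lieOToBlocks₂₂_surjective (m := m) hD).lieAlgebra_isSolvable⟩, fun ⟨_, _⟩ => ?_⟩
  refine isSolvable_of_lie_eq_zero_of_map_eq_zero (lieOToBlocks₁₁ hD) (lieOToBlocks₂₂ hD)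
    fun X Y hX₁₁ hX₂₂ hY₁₁ hY₂₂ => Subtype.ext ?_
  rw [LieSubalgebra.coe_bracket, eq_fromBlocks_of_lieOToBlocks_eq_zero hD hX₁₁ hX₂₂,
    eq_fromBlocks_of_lieOToBlocks_eq_zero hD hY₁₁ hY₂₂, lie_fromBlocks_zero_zero_zero]
  rfl

end blocks

theorem lieO_solvable_iff_of_charTwo_general (k : Type) [Field k] [CharP k 2]
    (m n : ℕ) (D : Fin n → k) (hD : ∀ i, D i ≠ 0) :
    LieAlgebra.IsSolvable
        ↥(lieO k (Matrix.fromBlocks 0 0 0 (Matrix.diagonal D)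
          : Matrix (Fin m ⊕ Fin n) (Fin m ⊕ Fin n) k)) ↔
      (m ≤ 2 ∧ n ≤ 2) := by
  rw [isSolvable_lieO_fromBlocks_iff hD, isSolvable_matrix_iff_card_le_two,
    isSolvable_lieO_diagonal_iff_card_le_two hD, Fintype.card_fin, Fintype.card_fin]

/-- Let `char k = 2`, `m, n ≥ 1`, `D` an invertible diagonal `n × n`
matrix and `M = 0ₘ ⊕ D`.  Then `o(M)` is solvable iff `m ≤ 2` and `n ≤ 2`. -/
theorem lieO_solvable_iff_of_charTwo (k : Type) [Field k] [CharP k 2]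
    (m n : ℕ) (hm : 1 ≤ m) (hn : 1 ≤ n) (D : Fin n → k) (hD : ∀ i, D i ≠ 0) :
    LieAlgebra.IsSolvable
        ↥(lieO k (Matrix.fromBlocks 0 0 0 (Matrix.diagonal D)
          : Matrix (Fin m ⊕ Fin n) (Fin m ⊕ Fin n) k)) ↔
      (m ≤ 2 ∧ n ≤ 2) :=
  lieO_solvable_iff_of_charTwo_general k m n D hD
end
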